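/- arXiv:1307.7039 — 2 statements merged into one kernel-verified Lean document; each statement's English description precedes it below -/
import Mathlib

section
/- Assume that the controlled community matrix M = N + A + C is a P-matrix. Then there is exactly one saturated equilibrium (x*, u*) of the controlled Lotka-Volterra system; that is, there is exactly one pair (x*, u*) with x* ≥ 0, u_i* = (d_i/e_i) x_i* for all i, and such that for each i = 1,…,n either x_i* > 0 and (M x*)_i = b_i, or x_i* = 0 and (M x*)_i ≥ b_i. -/
open MeasureTheory Filter Topology

noncomputable section

namespace LCPAux

variable {ι : Type} [Fintype ι] [DecidableEq ι]

/-- All principal minors positive, general index type. -/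
def PPred (M : Matrix ι ι ℝ) : Prop :=
  ∀ s : Finset ι,
    0 < (M.submatrix (fun i : {i // i ∈ s} => i.1) (fun i : {i // i ∈ s} => i.1)).det

lemma det_submatrix_pos {α : Type} [Fintype α] [DecidableEq α] {M : Matrix ι ι ℝ}
    (hP : PPred M) (f : α → ι) (hf : Function.Injective f) :
    0 < (M.submatrix f f).det := by
  classical
  set s : Finset ι := Finset.univ.map ⟨f, hf⟩ with hs
  have hmem : ∀ a : α, f a ∈ s := by intro a; simp [hs]
  have hsurj : ∀ y : {i // i ∈ s}, ∃ a : α, f a = y.1 := by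
    rintro ⟨y, hy⟩
    simpa [hs, Finset.mem_map] using hy
  let e : α ≃ {i // i ∈ s} :=
    Equiv.ofBijective (fun a => ⟨f a, hmem a⟩)
      ⟨fun a b hab => hf (congrArg Subtype.val hab), fun y => by
        obtain ⟨a, ha⟩ := hsurj y; exact ⟨a, Subtype.ext ha⟩⟩
  have hsub : M.submatrix f f
      = (M.submatrix (fun i : {i // i ∈ s} => i.1) (fun i : {i // i ∈ s} => i.1)).submatrix e e := by
    ext a b; rfl
  rw [hsub, Matrix.det_submatrix_equiv_self]
  exact hP s

lemma det_pos {M : Matrix ι ι ℝ} (hP : PPred M) : 0 < M.det := by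
  have := det_submatrix_pos hP id Function.injective_id
  simpa using this

lemma det_add_diagonal_pos {M : Matrix ι ι ℝ} (hP : PPred M) {d : ι → ℝ}
    (hd : ∀ i, 0 ≤ d i) : 0 < (M + Matrix.diagonal d).det := by
  classical
  have hrow : (M + Matrix.diagonal d) =
      Matrix.of ((fun i => M i) + (fun i => Matrix.diagonal d i)) := by
    ext i j; simp [Matrix.add_apply]
  have hexp := (Matrix.detRowAlternating (n := ι) (R := ℝ)).toMultilinearMap.map_add_univ
      (fun i => M i) (fun i => Matrix.diagonal d i)
  have hdet : (M + Matrix.diagonal d).det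
      = ∑ s : Finset ι,
          (Matrix.of (s.piecewise (fun i => M i) (fun i => Matrix.diagonal d i))).det := by
    rw [hrow]
    exact hexp
  -- each term equals principal minor times product of d's
  have hterm : ∀ s : Finset ι,
      (Matrix.of (s.piecewise (fun i => M i) (fun i => Matrix.diagonal d i))).det
        = (M.submatrix (fun i : {i // i ∈ s} => i.1) (fun i : {i // i ∈ s} => i.1)).det
          * ∏ i : {i // ¬ i ∈ s}, d i.1 := by
    intro s
    set Rs : Matrix ι ι ℝ :=
      Matrix.of (s.piecewise (fun i => M i) (fun i => Matrix.diagonal d i)) with hRs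
    have he : Rs.det = (Rs.submatrix (Equiv.sumCompl (· ∈ s)) (Equiv.sumCompl (· ∈ s))).det :=
      (Matrix.det_submatrix_equiv_self _ _).symm
    have hblock : Rs.submatrix (Equiv.sumCompl (· ∈ s)) (Equiv.sumCompl (· ∈ s))
        = Matrix.fromBlocks
            (M.submatrix (fun i : {i // i ∈ s} => i.1) (fun i : {i // i ∈ s} => i.1))
            (M.submatrix (fun i : {i // i ∈ s} => i.1) (fun i : {i // ¬ i ∈ s} => i.1))
            0 (Matrix.diagonal (fun i : {i // ¬ i ∈ s} => d i.1)) := by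
      ext i j
      rcases i with i | i <;> rcases j with j | j <;>
        simp [Rs, Matrix.submatrix, Equiv.sumCompl, Finset.piecewise, i.2,
          Matrix.diagonal, Matrix.fromBlocks, Subtype.ext_iff]
      exact fun h => absurd (h ▸ j.2) i.2
    rw [he, hblock, Matrix.det_fromBlocks_zero₂₁, Matrix.det_diagonal]
  rw [hdet]
  apply Finset.sum_pos'
  · intro s _
    rw [hterm s]
    exact mul_nonneg (le_of_lt (hP s)) (Finset.prod_nonneg fun i _ => hd i.1)
  · refine ⟨Finset.univ, Finset.mem_univ _, ?_⟩
    rw [hterm Finset.univ]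
    haveI : IsEmpty {i : ι // ¬ i ∈ (Finset.univ : Finset ι)} :=
      ⟨fun x => x.2 (Finset.mem_univ _)⟩
    rw [Finset.univ_eq_empty (α := {i : ι // ¬ i ∈ (Finset.univ : Finset ι)}), Finset.prod_empty,
      mul_one]
    exact hP Finset.univ



/-- Sign non-reversal property of P-matrices. -/
lemma exists_mul_mulVec_pos {M : Matrix ι ι ℝ} (hP : PPred M) {z : ι → ℝ} (hz : z ≠ 0) :
    ∃ i, 0 < z i * M.mulVec z i := by
  classical
  by_contra hcon
  push_neg at hcon
  obtain ⟨i₀, hi₀⟩ := Function.ne_iff.mp hz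
  let p : ι → Prop := fun i => z i ≠ 0
  let v : {i // p i} → ι := Subtype.val
  let M' : Matrix {i // p i} {i // p i} ℝ := M.submatrix v v
  have hP' : PPred M' := by
    intro s
    rw [Matrix.submatrix_submatrix]
    exact det_submatrix_pos hP _ (Subtype.val_injective.comp Subtype.val_injective)
  set d : {i // p i} → ℝ := fun i => -(M.mulVec z i.1 / z i.1) with hd_def
  have hd : ∀ i, 0 ≤ d i := by
    intro i
    have hzne : z i.1 ≠ 0 := i.2
    have h1 : z i.1 * M.mulVec z i.1 ≤ 0 := hcon i.1
    have h2 : M.mulVec z i.1 / z i.1 = z i.1 * M.mulVec z i.1 / (z i.1 ^ 2) := by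
      field_simp [hzne]
    have h3 : M.mulVec z i.1 / z i.1 ≤ 0 := by
      rw [h2]
      exact div_nonpos_of_nonpos_of_nonneg h1 (sq_nonneg _)
    simpa [hd_def] using neg_nonneg.mpr h3
  have hsum : ∀ i : ι, ∑ j : {j // p j}, M i j.1 * z j.1 = M.mulVec z i := by
    intro i
    rw [← Finset.sum_subtype (Finset.univ.filter p) (fun j => by simp [p]) (fun j => M i j * z j)]
    rw [Finset.sum_filter_of_ne (fun x _ hx => by
      intro hzx
      exact hx (by simp [hzx]))]
    simp [Matrix.mulVec, dotProduct]
  have hzero : (M' + Matrix.diagonal d).mulVec (fun i : {i // p i} => z i.1) = 0 := by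
    funext i
    rw [Matrix.add_mulVec]
    have h1 : M'.mulVec (fun i : {i // p i} => z i.1) i = M.mulVec z i.1 := by
      rw [← hsum i.1]
      simp [M', Matrix.mulVec, dotProduct, v]
    have h2 : (Matrix.diagonal d).mulVec (fun i : {i // p i} => z i.1) i = d i * z i.1 :=
      Matrix.mulVec_diagonal _ _ _
    have hzne : z i.1 ≠ 0 := i.2
    have h3 : d i * z i.1 = -(M.mulVec z i.1) := by
      rw [hd_def]
      simp only [neg_mul]
      rw [div_mul_cancel₀ _ hzne]
    simp [h1, h2, h3]
  have hne : (fun i : {i // p i} => z i.1) ≠ 0 := by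
    intro h
    exact hi₀ (congrFun h ⟨i₀, hi₀⟩)
  have hdet0 : (M' + Matrix.diagonal d).det = 0 :=
    Matrix.exists_mulVec_eq_zero_iff.mp ⟨_, hne, hzero⟩
  exact absurd hdet0 (ne_of_gt (det_add_diagonal_pos hP' hd))

/-- Coordinatewise complementarity gives nonpositive products for differences. -/
lemma comp_mul_le {M : Matrix ι ι ℝ} {b x y : ι → ℝ} {i : ι}
    (hx : (0 < x i ∧ M.mulVec x i = b i) ∨ (x i = 0 ∧ b i ≤ M.mulVec x i))
    (hy : (0 < y i ∧ M.mulVec y i = b i) ∨ (y i = 0 ∧ b i ≤ M.mulVec y i)) :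
    (x i - y i) * (M.mulVec x i - M.mulVec y i) ≤ 0 := by
  rcases hx with ⟨hx1, hx2⟩ | ⟨hx1, hx2⟩ <;> rcases hy with ⟨hy1, hy2⟩ | ⟨hy1, hy2⟩ <;> nlinarith

lemma sol_unique {M : Matrix ι ι ℝ} (hP : PPred M) {b x y : ι → ℝ}
    (hx : ∀ i, (0 < x i ∧ M.mulVec x i = b i) ∨ (x i = 0 ∧ b i ≤ M.mulVec x i))
    (hy : ∀ i, (0 < y i ∧ M.mulVec y i = b i) ∨ (y i = 0 ∧ b i ≤ M.mulVec y i)) :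
    x = y := by
  by_contra hne
  obtain ⟨i, hi⟩ := exists_mul_mulVec_pos hP (sub_ne_zero.mpr hne)
  rw [Matrix.mulVec_sub] at hi
  simp only [Pi.sub_apply] at hi
  exact absurd hi (not_lt.mpr (comp_mul_le (hx i) (hy i)))


/-- Key coercivity estimate from compactness and sign non-reversal. -/
lemma coercive {ι : Type} [Fintype ι] [DecidableEq ι] {M : Matrix ι ι ℝ} (hP : PPred M) (k : ι) :
    ∃ α > 0, ∀ z : ι → ℝ, 0 ≤ z k → (∀ i, i ≠ k → z i * M.mulVec z i ≤ 0) →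
      α * ‖z‖ ^ 2 ≤ z k * M.mulVec z k := by
  classical
  have hmulcont : ∀ i : ι, Continuous fun z : ι → ℝ => M.mulVec z i := by
    intro i
    simp only [Matrix.mulVec, dotProduct]
    exact continuous_finset_sum _ fun j _ => (continuous_const.mul (continuous_apply j))
  have hfcont : ∀ i : ι, Continuous fun z : ι → ℝ => z i * M.mulVec z i :=
    fun i => (continuous_apply i).mul (hmulcont i)
  set S₁ : Set (ι → ℝ) :=
    {z | ‖z‖ = 1 ∧ 0 ≤ z k ∧ ∀ i, i ≠ k → z i * M.mulVec z i ≤ 0} with hS₁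
  have hclosed : IsClosed {z : ι → ℝ | 0 ≤ z k ∧ ∀ i, i ≠ k → z i * M.mulVec z i ≤ 0} := by
    have hA : IsClosed {z : ι → ℝ | 0 ≤ z k} := isClosed_le continuous_const (continuous_apply k)
    have hB : IsClosed {z : ι → ℝ | ∀ i, i ≠ k → z i * M.mulVec z i ≤ 0} := by
      have heq : {z : ι → ℝ | ∀ i, i ≠ k → z i * M.mulVec z i ≤ 0}
          = ⋂ i, {z : ι → ℝ | i ≠ k → z i * M.mulVec z i ≤ 0} := by
        ext z; simp
      rw [heq]
      apply isClosed_iInter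
      intro i
      by_cases hik : i = k
      · have h2 : {z : ι → ℝ | i ≠ k → z i * M.mulVec z i ≤ 0} = Set.univ := by
          ext z; simp [hik]
        rw [h2]; exact isClosed_univ
      · have h2 : {z : ι → ℝ | i ≠ k → z i * M.mulVec z i ≤ 0}
            = {z : ι → ℝ | z i * M.mulVec z i ≤ 0} := by
          ext z; simp [hik]
        rw [h2]
        exact isClosed_le (hfcont i) continuous_const
    exact hA.inter hB
  have hcpt : IsCompact S₁ := by
    have h1 : S₁ = Metric.sphere (0 : ι → ℝ) 1 ∩
        {z : ι → ℝ | 0 ≤ z k ∧ ∀ i, i ≠ k → z i * M.mulVec z i ≤ 0} := by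
      ext z
      simp [hS₁, mem_sphere_zero_iff_norm, and_assoc]
    rw [h1]
    exact (isCompact_sphere 0 1).inter_right hclosed
  -- scaled membership
  have hscale : ∀ z : ι → ℝ, z ≠ 0 → 0 ≤ z k → (∀ i, i ≠ k → z i * M.mulVec z i ≤ 0) →
      (‖z‖⁻¹ • z) ∈ S₁ := by
    intro z hz0 hzk hzc
    have hn : 0 < ‖z‖ := norm_pos_iff.mpr hz0
    refine ⟨?_, ?_, ?_⟩
    · rw [norm_smul, norm_inv, norm_norm, inv_mul_cancel₀ hn.ne']
    · simp only [Pi.smul_apply, smul_eq_mul]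
      exact mul_nonneg (by positivity) hzk
    · intro i hik
      have h1 : M.mulVec (‖z‖⁻¹ • z) = ‖z‖⁻¹ • M.mulVec z := Matrix.mulVec_smul _ _ _
      rw [h1]
      simp only [Pi.smul_apply, smul_eq_mul]
      have := hzc i hik
      nlinarith [sq_nonneg ‖z‖⁻¹]
  -- value identity under scaling
  have hval : ∀ z : ι → ℝ, ∀ i : ι,
      (‖z‖⁻¹ • z) i * M.mulVec (‖z‖⁻¹ • z) i = ‖z‖⁻¹ ^ 2 * (z i * M.mulVec z i) := by
    intro z i
    rw [Matrix.mulVec_smul]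
    simp only [Pi.smul_apply, smul_eq_mul]
    ring
  rcases S₁.eq_empty_or_nonempty with hS | hS
  · refine ⟨1, one_pos, ?_⟩
    intro z hzk hzc
    by_cases hz0 : z = 0
    · simp [hz0]
    · exact absurd (hS ▸ hscale z hz0 hzk hzc) (Set.notMem_empty _)
  · obtain ⟨z₀, hz₀S, hz₀min'⟩ := hcpt.exists_isMinOn hS ((hfcont k).continuousOn)
    have hz₀min := isMinOn_iff.mp hz₀min'
    have hz₀ne : z₀ ≠ 0 := by
      intro h
      have h1 := hz₀S.1
      rw [h, norm_zero] at h1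
      exact zero_ne_one h1
    have hαpos : 0 < z₀ k * M.mulVec z₀ k := by
      obtain ⟨i, hi⟩ := exists_mul_mulVec_pos hP hz₀ne
      by_cases hik : i = k
      · exact hik ▸ hi
      · exact absurd hi (not_lt.mpr (hz₀S.2.2 i hik))
    refine ⟨z₀ k * M.mulVec z₀ k, hαpos, ?_⟩
    intro z hzk hzc
    by_cases hz0 : z = 0
    · simp [hz0]
    · have hn : 0 < ‖z‖ := norm_pos_iff.mpr hz0
      have h1 := hz₀min _ (hscale z hz0 hzk hzc)
      rw [hval z k] at h1
      have h2 := mul_le_mul_of_nonneg_right h1 (sq_nonneg ‖z‖)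
      have h3 : ‖z‖⁻¹ ^ 2 * (z k * M.mulVec z k) * ‖z‖ ^ 2 = z k * M.mulVec z k := by
        field_simp
      rw [h3] at h2
      linarith [h2]

/-- Existence of solutions of the LCP for P-matrices, by induction on the dimension. -/
lemma sol_exists : ∀ (N : ℕ) (ι : Type) (_ : Fintype ι) (_ : DecidableEq ι),
    Fintype.card ι = N →
    ∀ (M : Matrix ι ι ℝ), PPred M → ∀ b : ι → ℝ,
    ∃ x : ι → ℝ, (∀ i, 0 ≤ x i) ∧
      ∀ i, (0 < x i ∧ M.mulVec x i = b i) ∨ (x i = 0 ∧ b i ≤ M.mulVec x i) := by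
  intro N
  induction N with
  | zero =>
    intro ι _ _ hcard M hP b
    haveI : IsEmpty ι := Fintype.card_eq_zero_iff.mp hcard
    exact ⟨0, fun i => isEmptyElim i, fun i => isEmptyElim i⟩
  | succ N ih =>
    intro ι _ _ hcard M hP b
    classical
    have hne : Nonempty ι := Fintype.card_pos_iff.mp (by omega)
    obtain ⟨k⟩ := hne
    have hcard' : Fintype.card {i : ι // i ≠ k} = N := by
      have h1 : Fintype.card {i : ι // i = k} = 1 := Fintype.card_subtype_eq k
      have h2 := Fintype.card_subtype_compl (fun i : ι => i = k)
      have h3 : Fintype.card {i : ι // ¬ i = k} = Fintype.card ι - 1 := by rw [h2, h1]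
      simpa [hcard] using h3
    set M' : Matrix {i : ι // i ≠ k} {i : ι // i ≠ k} ℝ :=
      M.submatrix Subtype.val Subtype.val with hM'
    have hP' : PPred M' := by
      intro s
      rw [hM', Matrix.submatrix_submatrix]
      exact det_submatrix_pos hP _ (Subtype.val_injective.comp Subtype.val_injective)
    have hsol : ∀ t : ℝ, ∃ x' : {i : ι // i ≠ k} → ℝ, (∀ i, 0 ≤ x' i) ∧
        ∀ i, (0 < x' i ∧ M'.mulVec x' i = b i.1 - t * M i.1 k) ∨
          (x' i = 0 ∧ b i.1 - t * M i.1 k ≤ M'.mulVec x' i) :=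
      fun t => ih {i : ι // i ≠ k} _ _ hcard' M' hP' _
    choose x' hx'0 hx'c using hsol
    set X : ℝ → ι → ℝ := fun t i => if h : i = k then t else x' t ⟨i, h⟩ with hX
    have hXk : ∀ t, X t k = t := fun t => dif_pos rfl
    have hXne : ∀ t (i : {i : ι // i ≠ k}), X t i.1 = x' t i := fun t i => dif_neg i.2
    have hX0 : ∀ t, 0 ≤ t → ∀ i, 0 ≤ X t i := by
      intro t ht i
      by_cases h : i = k
      · rw [h, hXk]; exact ht
      · rw [show i = (⟨i, h⟩ : {i : ι // i ≠ k}).1 from rfl, hXne]; exact hx'0 t _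
    -- sum decomposition
    have hsum : ∀ (t : ℝ) (i : ι),
        M.mulVec (X t) i = (∑ j : {j : ι // j ≠ k}, M i j.1 * x' t j) + t * M i k := by
      intro t i
      have h1 : M.mulVec (X t) i = ∑ j : ι, M i j * X t j := by
        simp [Matrix.mulVec, dotProduct]
      have h2 := Finset.sum_erase_add Finset.univ (fun j => M i j * X t j) (Finset.mem_univ k)
      have h3 : ∑ j ∈ Finset.univ.erase k, M i j * X t j
          = ∑ j : {j : ι // j ≠ k}, M i j.1 * X t j.1 := by
        apply Finset.sum_subtype
        intro x; simp
      have h4 : ∑ j : {j : ι // j ≠ k}, M i j.1 * X t j.1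
          = ∑ j : {j : ι // j ≠ k}, M i j.1 * x' t j := by
        apply Finset.sum_congr rfl
        intro j _
        rw [hXne]
      rw [h1, ← h2, h3, h4]
      simp only [hXk]
      ring
    have hM'sum : ∀ (t : ℝ) (i : {i : ι // i ≠ k}),
        M'.mulVec (x' t) i = ∑ j : {j : ι // j ≠ k}, M i.1 j.1 * x' t j := by
      intro t i
      simp [hM', Matrix.mulVec, dotProduct, Matrix.submatrix_apply]
    -- complementarity off k
    have hcomp : ∀ (t : ℝ) (i : {i : ι // i ≠ k}),
        (0 < X t i.1 ∧ M.mulVec (X t) i.1 = b i.1) ∨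
          (X t i.1 = 0 ∧ b i.1 ≤ M.mulVec (X t) i.1) := by
      intro t i
      have h2 : M.mulVec (X t) i.1 = M'.mulVec (x' t) i + t * M i.1 k := by
        rw [hsum, hM'sum]
      rw [hXne]
      rcases hx'c t i with ⟨h3, h4⟩ | ⟨h3, h4⟩
      · left; exact ⟨h3, by rw [h2, h4]; ring⟩
      · right; exact ⟨h3, by rw [h2]; linarith⟩
    set g : ℝ → ℝ := fun t => M.mulVec (X t) k - b k with hg
    obtain ⟨α, hα0, hαk⟩ := coercive hP k
    set R : ℝ := ∑ j : ι, |M k j| with hR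
    have hR0 : 0 ≤ R := Finset.sum_nonneg fun j _ => abs_nonneg _
    have hMzabs : ∀ z : ι → ℝ, |M.mulVec z k| ≤ R * ‖z‖ := by
      intro z
      have h1 : M.mulVec z k = ∑ j : ι, M k j * z j := by
        simp [Matrix.mulVec, dotProduct]
      rw [h1, hR, Finset.sum_mul]
      refine (Finset.abs_sum_le_sum_abs _ _).trans (Finset.sum_le_sum fun j _ => ?_)
      rw [abs_mul]
      refine mul_le_mul_of_nonneg_left ?_ (abs_nonneg _)
      calc |z j| = ‖z j‖ := (Real.norm_eq_abs _).symm
        _ ≤ ‖z‖ := norm_le_pi_norm z j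
    -- the two key estimates
    have hkey : ∀ s t : ℝ, s < t →
        α * (t - s) ≤ g t - g s ∧ |g t - g s| ≤ R * (R / α) * (t - s) := by
      intro s t hst
      set z : ι → ℝ := X t - X s with hz
      have hzk : z k = t - s := by simp [hz, hXk]
      have hzc : ∀ i, i ≠ k → z i * M.mulVec z i ≤ 0 := by
        intro i hik
        have h1 := comp_mul_le (M := M) (b := b) (hcomp t ⟨i, hik⟩) (hcomp s ⟨i, hik⟩)
        rw [hz, Matrix.mulVec_sub]
        simpa using h1
      have hco := hαk z (by rw [hzk]; linarith) hzc
      have hgz : M.mulVec z k = g t - g s := by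
        rw [hz, Matrix.mulVec_sub]
        simp [hg]
      have hznorm : t - s ≤ ‖z‖ := by
        calc t - s = |z k| := by rw [hzk]; exact (abs_of_pos (by linarith)).symm
          _ = ‖z k‖ := (Real.norm_eq_abs _).symm
          _ ≤ ‖z‖ := norm_le_pi_norm z k
      have hco2 : α * ‖z‖ ^ 2 ≤ (t - s) * (g t - g s) := by
        rw [← hgz, ← hzk]; exact hco
      constructor
      · have hsq : (t - s) ^ 2 ≤ ‖z‖ ^ 2 := by nlinarith [norm_nonneg z]
        have h7 : (t - s) * (α * (t - s)) ≤ (t - s) * (g t - g s) := by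
          nlinarith [mul_le_mul_of_nonneg_left hsq hα0.le]
        exact le_of_mul_le_mul_left h7 (by linarith)
      · -- Lipschitz bound
        have hzle : ‖z‖ ≤ (t - s) * R / α := by
          rcases eq_or_lt_of_le (norm_nonneg z) with h | h
          · rw [← h]
            apply div_nonneg (by nlinarith) hα0.le
          · have h8 : α * ‖z‖ * ‖z‖ ≤ (t - s) * R * ‖z‖ := by
              have h9 : (t - s) * (g t - g s) ≤ (t - s) * (R * ‖z‖) := by
                have := (le_abs_self (M.mulVec z k)).trans (hMzabs z)
                rw [hgz] at this
                nlinarith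
              nlinarith
            have h10 : α * ‖z‖ ≤ (t - s) * R := le_of_mul_le_mul_right h8 h
            rw [le_div_iff₀ hα0]
            linarith
        have h11 : |g t - g s| ≤ R * ‖z‖ := by rw [← hgz]; exact hMzabs z
        calc |g t - g s| ≤ R * ‖z‖ := h11
          _ ≤ R * ((t - s) * R / α) := mul_le_mul_of_nonneg_left hzle hR0
          _ = R * (R / α) * (t - s) := by ring
    -- continuity of g
    have hlip : LipschitzWith (Real.toNNReal (R * (R / α))) g := by
      apply LipschitzWith.of_dist_le_mul
      intro s t
      have hC : (Real.toNNReal (R * (R / α)) : ℝ) = R * (R / α) :=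
        Real.coe_toNNReal _ (by positivity)
      rw [Real.dist_eq, Real.dist_eq, hC]
      rcases lt_trichotomy s t with h | h | h
      · have h2 := (hkey s t h).2
        have h3 : |s - t| = t - s := by rw [abs_of_neg (by linarith)]; ring
        rw [abs_sub_comm, h3]
        linarith
      · simp [h]
      · have h2 := (hkey t s h).2
        have h3 : |s - t| = s - t := abs_of_pos (by linarith)
        rw [h3]
        linarith
    have hcont : Continuous g := hlip.continuous
    -- finish by case split on the sign of g 0
    rcases le_or_gt (b k) (M.mulVec (X 0) k) with h0 | h0
    · refine ⟨X 0, hX0 0 le_rfl, ?_⟩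
      intro i
      by_cases h : i = k
      · subst h
        right
        exact ⟨hXk 0, h0⟩
      · exact hcomp 0 ⟨i, h⟩
    · -- g 0 < 0; use the intermediate value theorem
      have hg0 : g 0 < 0 := by simp [hg]; linarith
      set T : ℝ := (-(g 0)) / α + 1 with hT
      have hT0 : 0 < T := by
        rw [hT]
        exact add_pos (div_pos (by linarith) hα0) one_pos
      have hαT : α * T = -(g 0) + α := by
        rw [hT]
        field_simp
      have hgT : 0 < g T := by
        have := (hkey 0 T hT0).1
        have h2 : α * T ≤ g T - g 0 := by linarith [this]
        linarith
      have hIVT := intermediate_value_Icc (le_of_lt hT0) hcont.continuousOn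
      have h0mem : (0 : ℝ) ∈ Set.Icc (g 0) (g T) := ⟨le_of_lt hg0, le_of_lt hgT⟩
      obtain ⟨t, htmem, hgt⟩ := hIVT h0mem
      have htpos : 0 < t := by
        rcases eq_or_lt_of_le htmem.1 with h | h
        · exfalso; rw [← h] at hgt; linarith [hg0, hgt.symm ▸ hg0]
        · exact h
      refine ⟨X t, hX0 t (le_of_lt htpos), ?_⟩
      intro i
      by_cases h : i = k
      · subst h
        left
        refine ⟨by rw [hXk]; exact htpos, ?_⟩
        have : g t = 0 := hgt
        rw [hg] at this
        simp at this
        linarith [this]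
      · exact hcomp t ⟨i, h⟩

end LCPAux


/-- All principal minors of a square real matrix are positive. -/
def PrincipalMinorsPos {n : ℕ} (M : Matrix (Fin n) (Fin n) ℝ) : Prop :=
  ∀ s : Finset (Fin n),
    0 < (M.submatrix (fun i : {i // i ∈ s} => i.1) (fun i : {i // i ∈ s} => i.1)).det

/-- A P-matrix: all principal minors are positive. -/
def IsPMatrix {n : ℕ} (M : Matrix (Fin n) (Fin n) ℝ) : Prop := PrincipalMinorsPos M

/-- A saturated equilibrium of the controlled Lotka-Volterra system with community
matrix `M`: `xs ≥ 0`, `us i = (d i / e i) * xs i`, and for each `i` either `xs i > 0`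
and `(M xs)_i = b i`, or `xs i = 0` and `(M xs)_i ≥ b i`. -/
def SaturatedEquilibrium {n : ℕ} (M : Matrix (Fin n) (Fin n) ℝ) (b d e : Fin n → ℝ)
    (xs us : Fin n → ℝ) : Prop :=
  (∀ i, 0 ≤ xs i) ∧ (∀ i, us i = d i / e i * xs i) ∧
  ∀ i, (0 < xs i ∧ M.mulVec xs i = b i) ∨ (xs i = 0 ∧ b i ≤ M.mulVec xs i)

/-- Theorem 3.1: if the controlled community matrix `M = N + A + C` is a P-matrix,
then there is a unique saturated equilibrium of the controlled Lotka-Volterra system. -/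
theorem saturated_equilibrium_exists_unique_of_isPMatrix
    {n : ℕ} (hn : 1 ≤ n) (μ c d e b : Fin n → ℝ) (a : Matrix (Fin n) (Fin n) ℝ)
    (hμ : ∀ i, 0 < μ i) (hc : ∀ i, 0 < c i) (hd : ∀ i, 0 < d i) (he : ∀ i, 0 < e i)
    (M : Matrix (Fin n) (Fin n) ℝ)
    (hM : M = Matrix.diagonal μ + a + Matrix.diagonal (fun i => c i * d i / e i))
    (hP : IsPMatrix M) :
    ∃! p : (Fin n → ℝ) × (Fin n → ℝ), SaturatedEquilibrium M b d e p.1 p.2 := by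
  classical
  have hPP : LCPAux.PPred M := hP
  obtain ⟨x, hx0, hxc⟩ :=
    LCPAux.sol_exists n (Fin n) inferInstance inferInstance (Fintype.card_fin n) M hPP b
  refine ⟨(x, fun i => d i / e i * x i), ⟨hx0, fun i => rfl, hxc⟩, ?_⟩
  rintro ⟨y, u⟩ ⟨hy0, hu, hyc⟩
  simp only at hy0 hu hyc
  have hxy : y = x := LCPAux.sol_unique hPP hyc hxc
  simp only [Prod.mk.injEq]
  exact ⟨hxy, funext fun i => by rw [hu i, hxy]⟩
end
end

section
/- Assume that the matrix M̂_0 = N − |A| is a nonsingular M-matrix. Then every admissible solution (x, u) of the controlled Lotka-Volterra system with infinite delay is bounded on [0, ∞), i.e. there is a constant B such that |x_i(t)| ≤ B and |u_i(t)| ≤ B for all t ≥ 0 and i = 1,…,n. -/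
/-! Since `N - |A|` is a nonsingular M-matrix, some `X > 0` has `(N - |A|) X > 0` (pivot on a
diagonal entry: the Schur complement is again a nonsingular M-matrix, and a positive vector for it
extends to one for the whole matrix); scaling `X` up gives `(N - |A|) X > b` and `X` above the
initial history. Suppose `x` first touches `X` in coordinate `i` at time `t`. Every delayed
average of `x_j` then lies in `[0, X_j]`, so `∑ⱼ a_ij ∫ K_ij x_j ≥ -∑ⱼ |a_ij| X_j`, while the
control term is nonnegative; hence the growth rate of `x_i` at `t` is at most
`b_i - ((N - |A|) X)_i < 0`, which is impossible when `x_i` reaches `X_i` from below. With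
`x < X` known, the same first-contact argument bounds `u` by any `W` with `e_i W > d_i X_i`. -/

open MeasureTheory Filter Topology

noncomputable section

/-- All principal minors of a square real matrix are nonnegative. -/
def PrincipalMinorsNonneg {n : ℕ} (M : Matrix (Fin n) (Fin n) ℝ) : Prop :=
  ∀ s : Finset (Fin n),
    0 ≤ (M.submatrix (fun i : {i // i ∈ s} => i.1) (fun i : {i // i ∈ s} => i.1)).det

/-- A nonsingular M-matrix: nonpositive off-diagonal entries and all principal
minors positive. -/
def IsNonsingularMMatrix {n : ℕ} (M : Matrix (Fin n) (Fin n) ℝ) : Prop :=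
  (∀ i j, i ≠ j → M i j ≤ 0) ∧ PrincipalMinorsPos M

/-- An M-matrix: nonpositive off-diagonal entries and all principal minors
nonnegative. -/
def IsMMatrix {n : ℕ} (M : Matrix (Fin n) (Fin n) ℝ) : Prop :=
  (∀ i j, i ≠ j → M i j ≤ 0) ∧ PrincipalMinorsNonneg M

/-- A normalized kernel: nonnegative on `[0,∞)`, integrable on `(0,∞)`, with
integral one. -/
def KernelOK (f : ℝ → ℝ) : Prop :=
  (∀ s, 0 ≤ s → 0 ≤ f s) ∧ MeasureTheory.IntegrableOn f (Set.Ioi 0) ∧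
  ∫ s in Set.Ioi (0:ℝ), f s = 1

/-- Effectiveness of a control kernel `g`: `∫_0^∞ g(s) φ(-s) ds > 0` for every
bounded continuous nonnegative `φ` on `(-∞,0]` with `φ(0) > 0`. -/
def ControlKernelPos (g : ℝ → ℝ) : Prop :=
  ∀ φ : ℝ → ℝ, Continuous φ → (∀ t ≤ (0:ℝ), 0 ≤ φ t) → (∃ B, ∀ t ≤ (0:ℝ), φ t ≤ B) →
    0 < φ 0 → 0 < ∫ s in Set.Ioi (0:ℝ), g s * φ (-s)

/-- An admissible solution of the controlled Lotka-Volterra system with infinite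
delay: continuous, componentwise nonnegative, bounded on `(-∞,0]`, positive at `0`,
differentiable on `(0,∞)` and satisfying the system there. -/
def AdmissibleSolution {n : ℕ} (b μ c d e : Fin n → ℝ) (a : Matrix (Fin n) (Fin n) ℝ)
    (K : Fin n → Fin n → ℝ → ℝ) (G : Fin n → ℝ → ℝ) (x u : ℝ → Fin n → ℝ) : Prop :=
  (∀ i, Continuous fun t => x t i) ∧ (∀ i, Continuous fun t => u t i) ∧
  (∀ t i, 0 ≤ x t i) ∧ (∀ t i, 0 ≤ u t i) ∧
  (∃ B : ℝ, ∀ t ≤ (0:ℝ), ∀ i, x t i ≤ B ∧ u t i ≤ B) ∧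
  (∀ i, 0 < x 0 i) ∧ (∀ i, 0 < u 0 i) ∧
  (∀ i, ∀ t, 0 < t → HasDerivAt (fun τ => x τ i)
      (x t i * (b i - μ i * x t i
        - (∑ j, a i j * ∫ s in Set.Ioi (0:ℝ), K i j s * x (t - s) j)
        - c i * ∫ s in Set.Ioi (0:ℝ), G i s * u (t - s) i)) t) ∧
  (∀ i, ∀ t, 0 < t → HasDerivAt (fun τ => u τ i) (-(e i) * u t i + d i * x t i) t)


open Matrix Function

namespace Matrix

def schurComplementZero {m : ℕ} (M : Matrix (Fin (m + 1)) (Fin (m + 1)) ℝ) :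
    Matrix (Fin m) (Fin m) ℝ :=
  of fun i j => M i.succ j.succ - M i.succ 0 * M 0 j.succ / M 0 0

theorem det_submatrix_sumElim_zero_succ {m : ℕ} {κ : Type*} [Fintype κ] [DecidableEq κ]
    (M : Matrix (Fin (m + 1)) (Fin (m + 1)) ℝ) (hM : M 0 0 ≠ 0) (g : κ → Fin m) :
    (M.submatrix (Sum.elim (fun _ : Unit => 0) (Fin.succ ∘ g))
        (Sum.elim (fun _ : Unit => 0) (Fin.succ ∘ g))).det =
      M 0 0 * ((schurComplementZero M).submatrix g g).det := by
  let A : Matrix Unit Unit ℝ := of fun _ _ => M 0 0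
  let B : Matrix Unit κ ℝ := of fun _ j => M 0 (g j).succ
  let C : Matrix κ Unit ℝ := of fun i _ => M (g i).succ 0
  let D : Matrix κ κ ℝ := M.submatrix (Fin.succ ∘ g) (Fin.succ ∘ g)
  let _ : Invertible A := invertibleOfIsUnitDet A (by simpa [A] using hM)
  have hblocks : M.submatrix (Sum.elim (fun _ : Unit => 0) (Fin.succ ∘ g))
      (Sum.elim (fun _ : Unit => 0) (Fin.succ ∘ g)) = fromBlocks A B C D := by
    ext (i | i) (j | j) <;> rfl
  have hschur : D - C * ⅟A * B = (schurComplementZero M).submatrix g g := by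
    ext i j
    simp only [A, B, C, D, invOf_eq_nonsing_inv, inv_subsingleton, Ring.inverse_eq_inv',
      schurComplementZero, sub_apply, submatrix_apply, of_apply, Function.comp_apply, mul_apply,
      Finset.univ_unique, Finset.sum_singleton, diagonal_apply_eq]
    ring
  rw [hblocks, det_fromBlocks₁₁, det_unique, hschur]
  rfl

end Matrix

namespace PrincipalMinorsPos

variable {n : ℕ} {M : Matrix (Fin n) (Fin n) ℝ}

theorem det_submatrix_pos (hM : PrincipalMinorsPos M) {κ : Type*} [Fintype κ] [DecidableEq κ]
    {f : κ → Fin n} (hf : Injective f) : 0 < (M.submatrix f f).det := by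
  let e : κ ≃ {i // i ∈ Finset.univ.image f} :=
    Equiv.ofBijective (fun k => ⟨f k, Finset.mem_image_of_mem f (Finset.mem_univ k)⟩)
      ⟨fun k l h => hf (congrArg Subtype.val h), fun ⟨i, hi⟩ => by
        obtain ⟨k, -, rfl⟩ := Finset.mem_image.mp hi
        exact ⟨k, rfl⟩⟩
  have := hM (Finset.univ.image f)
  rwa [← det_submatrix_equiv_self e] at this

theorem diag_pos (hM : PrincipalMinorsPos M) (i : Fin n) : 0 < M i i := by
  simpa using hM.det_submatrix_pos (f := fun _ : Unit => i) (injective_of_subsingleton _)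

theorem schurComplementZero {M : Matrix (Fin (n + 1)) (Fin (n + 1)) ℝ}
    (hM : PrincipalMinorsPos M) : PrincipalMinorsPos M.schurComplementZero := by
  intro s
  have hinj : Injective (Sum.elim (fun _ : Unit => (0 : Fin (n + 1)))
      (Fin.succ ∘ fun i : {i // i ∈ s} => i.1)) :=
    (injective_of_subsingleton _).sumElim (Fin.succ_injective n |>.comp Subtype.val_injective)
      fun _ i => (Fin.succ_ne_zero i.1).symm
  have hpos := hM.det_submatrix_pos hinj
  rw [det_submatrix_sumElim_zero_succ M (hM.diag_pos 0).ne'] at hpos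
  exact pos_of_mul_pos_right hpos (hM.diag_pos 0).le

end PrincipalMinorsPos

namespace IsNonsingularMMatrix

theorem schurComplementZero {n : ℕ} {M : Matrix (Fin (n + 1)) (Fin (n + 1)) ℝ}
    (hM : IsNonsingularMMatrix M) : IsNonsingularMMatrix M.schurComplementZero := by
  obtain ⟨hoff, hP⟩ := hM
  refine ⟨fun i j hij => ?_, hP.schurComplementZero⟩
  have hij' : M i.succ j.succ ≤ 0 := hoff _ _ (Fin.succ_injective n |>.ne hij)
  have hi0 : M i.succ 0 ≤ 0 := hoff _ _ (Fin.succ_ne_zero i)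
  have h0j : M 0 j.succ ≤ 0 := hoff _ _ (Fin.succ_ne_zero j).symm
  have hcorrection : 0 ≤ M i.succ 0 * M 0 j.succ / M 0 0 :=
    div_nonneg (mul_nonneg_of_nonpos_of_nonpos hi0 h0j) (hP.diag_pos 0).le
  simp only [Matrix.schurComplementZero, of_apply]
  linarith

theorem exists_pos_mulVec_pos {n : ℕ} {M : Matrix (Fin n) (Fin n) ℝ}
    (hM : IsNonsingularMMatrix M) : ∃ v : Fin n → ℝ, (∀ i, 0 < v i) ∧ ∀ i, 0 < (M *ᵥ v) i := by
  induction n with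
  | zero => exact ⟨0, finZeroElim, finZeroElim⟩
  | succ m ih =>
    obtain ⟨y, hy, hSy⟩ := ih hM.schurComplementZero
    have hM00 : 0 < M 0 0 := hM.2.diag_pos 0
    set P := ∑ j, M 0 j.succ * y j
    have hP : P ≤ 0 := Finset.sum_nonpos fun j _ =>
      mul_nonpos_of_nonpos_of_nonneg (hM.1 _ _ (Fin.succ_ne_zero j).symm) (hy j).le
    have hrow : ∀ δ, (M *ᵥ Fin.cons (δ - P / M 0 0) y) 0 = M 0 0 * δ ∧
        ∀ i, (M *ᵥ Fin.cons (δ - P / M 0 0) y) i.succ =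
          (M.schurComplementZero *ᵥ y) i + M i.succ 0 * δ := by
      intro δ
      simp only [mulVec, dotProduct, Fin.sum_univ_succ, Fin.cons_zero, Fin.cons_succ,
        Matrix.schurComplementZero, of_apply, sub_mul, Finset.sum_sub_distrib]
      refine ⟨by field_simp; ring, fun i => ?_⟩
      have : ∑ j, M i.succ 0 * M 0 j.succ / M 0 0 * y j = M i.succ 0 / M 0 0 * P := by
        rw [Finset.mul_sum]; exact Finset.sum_congr rfl fun j _ => by ring
      rw [this]; ring
    have hsmall : ∀ᶠ δ in 𝓝[>] 0, ∀ i, 0 < (M.schurComplementZero *ᵥ y) i + M i.succ 0 * δ := by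
      refine Filter.eventually_all.2 fun i => nhdsWithin_le_nhds ?_
      have hcont : Continuous fun δ => (M.schurComplementZero *ᵥ y) i + M i.succ 0 * δ := by
        fun_prop
      exact hcont.tendsto 0 |>.eventually (lt_mem_nhds (by simpa using hSy i))
    obtain ⟨δ, hδ, hδpos⟩ := (hsmall.and self_mem_nhdsWithin).exists
    have hδpos : 0 < δ := hδpos
    refine ⟨Fin.cons (δ - P / M 0 0) y, Fin.cases ?_ hy, Fin.cases ?_ fun i => ?_⟩
    · have : P / M 0 0 ≤ 0 := div_nonpos_of_nonpos_of_nonneg hP hM00.le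
      simp only [Fin.cons_zero]
      linarith
    · rw [(hrow δ).1]; exact mul_pos hM00 hδpos
    · rw [(hrow δ).2]; exact hδ i

theorem exists_mulVec_gt {n : ℕ} {M : Matrix (Fin n) (Fin n) ℝ} (hM : IsNonsingularMMatrix M)
    (b : Fin n → ℝ) (B : ℝ) : ∃ v : Fin n → ℝ, (∀ i, B < v i) ∧ ∀ i, b i < (M *ᵥ v) i := by
  obtain ⟨v, hv, hMv⟩ := hM.exists_pos_mulVec_pos
  have hlarge : ∀ᶠ V in atTop, ∀ i, B < V * v i ∧ b i < V * (M *ᵥ v) i :=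
    Filter.eventually_all.2 fun i =>
      ((tendsto_id.atTop_mul_const (hv i)).eventually_gt_atTop B).and
        ((tendsto_id.atTop_mul_const (hMv i)).eventually_gt_atTop (b i))
  obtain ⟨V, hV⟩ := hlarge.exists
  exact ⟨V • v, fun i => (hV i).1, fun i => by simpa [mulVec_smul] using (hV i).2⟩

end IsNonsingularMMatrix

theorem KernelOK.abs_setIntegral_mul_le {k φ : ℝ → ℝ} {C : ℝ} (hk : KernelOK k)
    (hφ : ∀ s > 0, |φ s| ≤ C) : |∫ s in Set.Ioi 0, k s * φ s| ≤ C := by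
  obtain ⟨hk0, hkint, hk1⟩ := hk
  calc |∫ s in Set.Ioi 0, k s * φ s| ≤ ∫ s in Set.Ioi 0, C * k s := by
        rw [← Real.norm_eq_abs]
        refine norm_integral_le_of_norm_le (hkint.const_mul C) ?_
        filter_upwards [self_mem_ae_restrict measurableSet_Ioi] with s hs
        rw [Real.norm_eq_abs, abs_mul, abs_of_nonneg (hk0 s (le_of_lt hs)), mul_comm]
        exact mul_le_mul_of_nonneg_right (hφ s hs) (hk0 s (le_of_lt hs))
    _ = C := by rw [integral_const_mul, hk1, mul_one]

theorem HasDerivAt.nonneg_of_forall_lt_le {f : ℝ → ℝ} {f' t : ℝ} (hf : HasDerivAt f f' t)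
    (h : ∀ s < t, f s ≤ f t) : 0 ≤ f' := by
  have hslope : Tendsto (slope f t) (𝓝[<] t) (𝓝 f') :=
    (hasDerivAt_iff_tendsto_slope.mp hf).mono_left (nhdsWithin_mono t fun _ hs => ne_of_lt hs)
  refine ge_of_tendsto hslope (eventually_nhdsWithin_of_forall fun s hs => ?_)
  rw [slope_def_field]
  exact div_nonneg_of_nonpos (sub_nonpos.2 (h s hs)) (sub_nonpos.2 (le_of_lt hs))

theorem forall_lt_of_deriv_neg_at_first_contact {ι : Type*} [Finite ι] {f f' : ℝ → ι → ℝ}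
    {L : ι → ℝ} (hf : ∀ i, Continuous fun t => f t i) (h0 : ∀ t ≤ 0, ∀ i, f t i < L i)
    (hderiv : ∀ i, ∀ t, 0 < t → HasDerivAt (fun τ => f τ i) (f' t i) t)
    (hcontact : ∀ t, 0 < t → ∀ i, (∀ s < t, ∀ j, f s j < L j) → f t i = L i → f' t i < 0) :
    ∀ t i, f t i < L i := by
  by_contra! hcross
  set T := {t | ∃ i, L i ≤ f t i}
  have hTpos : ∀ t ∈ T, 0 < t := fun t ⟨i, hi⟩ => by
    by_contra! ht; exact (h0 t ht i).not_ge hi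
  have hTclosed : IsClosed T := by
    simpa only [T, Set.ofPred_exists] using
      isClosed_iUnion_of_finite fun i => isClosed_le continuous_const (hf i)
  have hTbdd : BddBelow T := ⟨0, fun t ht => (hTpos t ht).le⟩
  have hmem := hTclosed.csInf_mem hcross hTbdd
  set t₀ := sInf T
  have hpos := hTpos t₀ hmem
  obtain ⟨i, hi⟩ := hmem
  have hbefore : ∀ s < t₀, ∀ j, f s j < L j := fun s hs j => by
    by_contra! hj; exact (csInf_le hTbdd ⟨j, hj⟩).not_gt hs
  have htouch : f t₀ i = L i := by
    have hleft : Tendsto (fun s => f s i) (𝓝[<] t₀) (𝓝 (f t₀ i)) :=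
      (hf i).tendsto t₀ |>.mono_left nhdsWithin_le_nhds
    exact le_antisymm (le_of_tendsto hleft
      (eventually_nhdsWithin_of_forall fun s hs => (hbefore s hs i).le)) hi
  exact (hcontact t₀ hpos i hbefore htouch).not_ge
    ((hderiv i t₀ hpos).nonneg_of_forall_lt_le fun s hs => htouch ▸ (hbefore s hs i).le)

theorem lotkaVolterra_rate_neg_of_past_le {n : ℕ} {μ c b : Fin n → ℝ}
    {a : Matrix (Fin n) (Fin n) ℝ} {K : Fin n → Fin n → ℝ → ℝ} {G : Fin n → ℝ → ℝ}
    {x u : ℝ → Fin n → ℝ} {X : Fin n → ℝ}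
    {t : ℝ} {i : Fin n} (hc : 0 ≤ c i) (hK : ∀ j, KernelOK (K i j))
    (hG : ∀ s, 0 ≤ s → 0 ≤ G i s) (hxnn : ∀ t j, 0 ≤ x t j) (hunn : ∀ t, 0 ≤ u t i)
    (hpast : ∀ s < t, ∀ j, x s j ≤ X j) (hxt : x t i = X i)
    (hb : b i < ((Matrix.diagonal μ - Matrix.of fun i j => |a i j|) *ᵥ X) i) :
    b i - μ i * x t i - (∑ j, a i j * ∫ s in Set.Ioi (0:ℝ), K i j s * x (t - s) j)
      - c i * ∫ s in Set.Ioi (0:ℝ), G i s * u (t - s) i < 0 := by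
  have hinteraction : -∑ j, |a i j| * X j ≤
      ∑ j, a i j * ∫ s in Set.Ioi (0:ℝ), K i j s * x (t - s) j := by
    rw [← Finset.sum_neg_distrib]
    refine Finset.sum_le_sum fun j _ => ?_
    have hI := (hK j).abs_setIntegral_mul_le (φ := fun s => x (t - s) j) fun s hs => by
      rw [abs_of_nonneg (hxnn _ _)]
      exact hpast _ (by linarith) j
    calc -(|a i j| * X j) ≤ -|a i j * ∫ s in Set.Ioi (0:ℝ), K i j s * x (t - s) j| := by
          rw [abs_mul]; exact neg_le_neg (mul_le_mul_of_nonneg_left hI (abs_nonneg _))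
      _ ≤ _ := neg_abs_le _
  have hcontrol : 0 ≤ c i * ∫ s in Set.Ioi (0:ℝ), G i s * u (t - s) i :=
    mul_nonneg hc (setIntegral_nonneg measurableSet_Ioi fun s hs =>
      mul_nonneg (hG s (le_of_lt hs)) (hunn _))
  have hMX : ((Matrix.diagonal μ - Matrix.of fun i j => |a i j|) *ᵥ X) i =
      μ i * X i - ∑ j, |a i j| * X j := by
    rw [sub_mulVec, Pi.sub_apply, mulVec_diagonal]
    rfl
  rw [hxt]
  linarith

theorem bounded_of_nonsingularMMatrix_general
    {n : ℕ} (μ c d e b : Fin n → ℝ) (a : Matrix (Fin n) (Fin n) ℝ)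
    (hc : ∀ i, 0 < c i) (hd : ∀ i, 0 < d i) (he : ∀ i, 0 < e i)
    (K : Fin n → Fin n → ℝ → ℝ) (G : Fin n → ℝ → ℝ)
    (hK : ∀ i j, KernelOK (K i j)) (hG : ∀ i, KernelOK (G i))
    (hM0 : IsNonsingularMMatrix (Matrix.diagonal μ - Matrix.of fun i j => |a i j|))
    (x u : ℝ → Fin n → ℝ) (hadm : AdmissibleSolution b μ c d e a K G x u) :
    ∃ B : ℝ, ∀ t, 0 ≤ t → ∀ i, |x t i| ≤ B ∧ |u t i| ≤ B := by
  obtain ⟨hxc, huc, hxnn, hunn, ⟨B₀, hB₀⟩, -, -, hxode, huode⟩ := hadm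
  obtain ⟨X, hXB₀, hbX⟩ := hM0.exists_mulVec_gt b (max B₀ 0)
  have hx : ∀ t i, x t i < X i := by
    refine forall_lt_of_deriv_neg_at_first_contact hxc
      (fun t ht i => (hB₀ t ht i).1.trans_lt ((le_max_left _ _).trans_lt (hXB₀ i))) hxode ?_
    intro t _ i hpast hxt
    refine mul_neg_of_pos_of_neg (hxt ▸ (le_max_right _ _).trans_lt (hXB₀ i)) ?_
    exact lotkaVolterra_rate_neg_of_past_le (hc i).le (hK i) (hG i).1 hxnn (hunn · i)
      (fun s hs j => (hpast s hs j).le) hxt (hbX i)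
  obtain ⟨W, hW⟩ : ∃ W, ∀ i, B₀ < W ∧ X i < W ∧ d i * X i < e i * W :=
    (Filter.eventually_all.2 fun i => (eventually_gt_atTop B₀).and <|
      (eventually_gt_atTop (X i)).and <|
        (tendsto_id.const_mul_atTop (he i)).eventually_gt_atTop (d i * X i)).exists
  have hu : ∀ t i, u t i < W := by
    refine forall_lt_of_deriv_neg_at_first_contact huc
      (fun t ht i => (hB₀ t ht i).2.trans_lt (hW i).1) huode ?_
    intro t _ i _ hut
    have hdx := mul_lt_mul_of_pos_left (hx t i) (hd i)
    rw [hut]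
    linarith [(hW i).2.2]
  refine ⟨W, fun t _ i => ⟨?_, ?_⟩⟩
  · rw [abs_of_nonneg (hxnn t i)]; exact ((hx t i).trans (hW i).2.1).le
  · rw [abs_of_nonneg (hunn t i)]; exact (hu t i).le

/-- Lemma 3.1: if `M̂₀ = N - |A|` is a nonsingular M-matrix, then every admissible
solution of the controlled Lotka-Volterra system is bounded on `[0,∞)`. -/
theorem bounded_of_nonsingularMMatrix
    {n : ℕ} (hn : 1 ≤ n) (μ c d e b : Fin n → ℝ) (a : Matrix (Fin n) (Fin n) ℝ)
    (hμ : ∀ i, 0 < μ i) (hc : ∀ i, 0 < c i) (hd : ∀ i, 0 < d i) (he : ∀ i, 0 < e i)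
    (K : Fin n → Fin n → ℝ → ℝ) (G : Fin n → ℝ → ℝ)
    (hK : ∀ i j, KernelOK (K i j)) (hG : ∀ i, KernelOK (G i))
    (hM0 : IsNonsingularMMatrix (Matrix.diagonal μ - Matrix.of fun i j => |a i j|))
    (x u : ℝ → Fin n → ℝ) (hadm : AdmissibleSolution b μ c d e a K G x u) :
    ∃ B : ℝ, ∀ t, 0 ≤ t → ∀ i, |x t i| ≤ B ∧ |u t i| ≤ B :=
  bounded_of_nonsingularMMatrix_general μ c d e b a hc hd he K G hK hG hM0 x u hadm
end
end
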